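/- Assume J positive, strictly decreasing, ∑_{n=1}^∞ J(n) < ∞, and 0 < h < ∑_{n=1}^∞ J(n). Define k_c = min{ k ∈ ℕ : ∑_{n=k+1}^∞ J(n) ≤ h }. Then for all sufficiently large N, the function f(k) = H(L^(k)) on {0,...,N} attains a unique strict global maximum at k_c. -/

import Mathlib

/-!
Raising the droplet `L^(k)` to `L^(k+1)` flips the spin at site `k`, which changes the energy by
`2 (∑_{m=1}^{N-1-k} J(m) - ∑_{m=1}^{k} J(m) - h)`. For `k ≥ k_c` this is negative for every `N`,
because `∑_{m=1}^{N-1-k} J(m) < ∑_{m≥1} J(m) ≤ ∑_{m=1}^{k} J(m) + h` by the choice of `k_c`. For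
`k < k_c` we have `∑_{m=1}^{k} J(m) + h < ∑_{m≥1} J(m)`, so the increment is positive as soon as
`N - 1 - k` is large. Hence `k ↦ H(L^(k))` increases strictly up to `k_c` and decreases strictly
after it.
-/

open Finset

/-- Long-range Ising Hamiltonian with free boundary conditions on {0,...,N-1}:
`H(σ) = -∑_{i<j} J(|i-j|) σᵢ σⱼ - h ∑ᵢ σᵢ`. -/
noncomputable def H (N : ℕ) (J : ℕ → ℝ) (h : ℝ) (σ : Fin N → ℝ) : ℝ :=
  -(∑ i : Fin N, ∑ j : Fin N,
      if (i : ℕ) < (j : ℕ) then J (Nat.dist (i : ℕ) (j : ℕ)) * σ i * σ j else 0)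
    - h * ∑ i : Fin N, σ i

/-- A spin configuration takes values in {-1, +1}. -/
def IsConfig {N : ℕ} (σ : Fin N → ℝ) : Prop := ∀ i, σ i = 1 ∨ σ i = -1

/-- The configuration `L^(k)`: +1 on the first k sites, -1 elsewhere. -/
def Lconf (N k : ℕ) : Fin N → ℝ := fun i => if (i : ℕ) < k then 1 else -1

/-- The configuration `R^(k)`: +1 on the last k sites, -1 elsewhere. -/
def Rconf (N k : ℕ) : Fin N → ℝ := fun i => if N - k ≤ (i : ℕ) then 1 else -1

open Filter

noncomputable def pairEnergy (N : ℕ) (J : ℕ → ℝ) (σ : Fin N → ℝ) : ℝ :=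
  ∑ i : Fin N, ∑ j : Fin N,
    if (i : ℕ) < (j : ℕ) then J (Nat.dist (i : ℕ) (j : ℕ)) * σ i * σ j else 0

lemma H_eq_neg_pairEnergy_sub (N : ℕ) (J : ℕ → ℝ) (h : ℝ) (σ : Fin N → ℝ) :
    H N J h σ = -pairEnergy N J σ - h * ∑ i, σ i := rfl

lemma sum_range_ite_lt_dist (J : ℕ → ℝ) (N k : ℕ) :
    ∑ j ∈ range N, (if k < j then J (Nat.dist k j) else 0) =
      ∑ m ∈ range (N - 1 - k), J (m + 1) := by
  rw [← sum_filter, show (range N).filter (k < ·) = Ico (k + 1) N by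
      ext; simp only [mem_filter, mem_range, mem_Ico]; omega,
    sum_Ico_eq_sum_range, show N - (k + 1) = N - 1 - k by omega]
  refine sum_congr rfl fun m _ => ?_
  rw [Nat.dist_eq_sub_of_le (by omega)]
  congr 1
  omega

lemma sum_range_ite_dist_lt (J : ℕ → ℝ) {N k : ℕ} (hk : k ≤ N) :
    ∑ i ∈ range N, (if i < k then J (Nat.dist i k) else 0) = ∑ m ∈ range k, J (m + 1) := by
  rw [← sum_filter, show (range N).filter (· < k) = range k by
      ext; simp only [mem_filter, mem_range]; omega,
    ← sum_range_reflect]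
  refine sum_congr rfl fun m hm => ?_
  rw [mem_range] at hm
  rw [Nat.dist_eq_sub_of_le (by omega)]
  congr 1
  omega

lemma Lconf_succ_sub_Lconf {N k : ℕ} (hk : k < N) (i : Fin N) :
    Lconf N (k + 1) i - Lconf N k i = if i = ⟨k, hk⟩ then 2 else 0 := by
  simp only [Lconf, Fin.ext_iff]
  split_ifs <;> first | omega | norm_num

lemma pairEnergy_summand_Lconf_succ_sub {N k : ℕ} (J : ℕ → ℝ) (hk : k < N) (i j : Fin N) :
    ((if (i : ℕ) < j then J (Nat.dist i j) * Lconf N (k + 1) i * Lconf N (k + 1) j else 0) -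
      if (i : ℕ) < j then J (Nat.dist i j) * Lconf N k i * Lconf N k j else 0) =
    (if i = ⟨k, hk⟩ then -2 * (if k < (j : ℕ) then J (Nat.dist k j) else 0) else 0) +
      if j = ⟨k, hk⟩ then 2 * (if (i : ℕ) < k then J (Nat.dist i k) else 0) else 0 := by
  simp only [Lconf, Fin.ext_iff]
  split_ifs <;> first | omega | subst_vars; ring

lemma pairEnergy_Lconf_succ_sub (J : ℕ → ℝ) {N k : ℕ} (hk : k < N) :
    pairEnergy N J (Lconf N (k + 1)) - pairEnergy N J (Lconf N k) =
      2 * (∑ m ∈ range k, J (m + 1) - ∑ m ∈ range (N - 1 - k), J (m + 1)) := by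
  simp only [pairEnergy, ← sum_sub_distrib, pairEnergy_summand_Lconf_succ_sub J hk, sum_add_distrib]
  rw [sum_comm (f := fun i j => if i = _ then _ else _)]
  simp only [Fintype.sum_ite_eq']
  rw [← mul_sum, ← mul_sum,
    Fin.sum_univ_eq_sum_range (fun j => if k < j then J (Nat.dist k j) else 0),
    Fin.sum_univ_eq_sum_range (fun i => if i < k then J (Nat.dist i k) else 0),
    sum_range_ite_lt_dist, sum_range_ite_dist_lt J hk.le]
  ring

lemma H_Lconf_succ_sub (J : ℕ → ℝ) (h : ℝ) {N k : ℕ} (hk : k < N) :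
    H N J h (Lconf N (k + 1)) - H N J h (Lconf N k) =
      2 * (∑ m ∈ range (N - 1 - k), J (m + 1) - ∑ m ∈ range k, J (m + 1) - h) := by
  have hspin : ∑ i, Lconf N (k + 1) i - ∑ i, Lconf N k i = 2 := by
    simp only [← sum_sub_distrib, Lconf_succ_sub_Lconf hk, Fintype.sum_ite_eq']
  rw [H_eq_neg_pairEnergy_sub, H_eq_neg_pairEnergy_sub]
  linear_combination -pairEnergy_Lconf_succ_sub J hk - h * hspin

/-- With `a n = J (n + 1)`, the sum `∑' n, a (n + k)` is the tail `∑_{n > k} J(n)`. -/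
noncomputable def criticalSize (a : ℕ → ℝ) (h : ℝ) : ℕ := sInf {k : ℕ | ∑' n, a (n + k) ≤ h}

section CriticalSize

variable {a : ℕ → ℝ} {h : ℝ}

lemma tsum_nat_add_criticalSize_le (hh : 0 < h) : ∑' n, a (n + criticalSize a h) ≤ h :=
  Nat.sInf_mem ((tendsto_sum_nat_add a).eventually (ge_mem_nhds hh)).exists

lemma lt_tsum_nat_add_of_lt_criticalSize {k : ℕ} (hk : k < criticalSize a h) :
    h < ∑' n, a (n + k) :=
  not_le.1 (Nat.notMem_of_lt_sInf hk)

lemma eventually_sum_range_lt_add_of_lt_criticalSize (hs : Summable a) :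
    ∀ᶠ n in atTop, ∀ k < criticalSize a h, ∑ m ∈ range k, a m + h < ∑ m ∈ range n, a m := by
  refine (eventually_all_finite (Set.finite_Iio _)).2 fun k hk => ?_
  have hlt : ∑ m ∈ range k, a m + h < ∑' n, a n := by
    rw [← hs.sum_add_tsum_nat_add k]
    exact add_lt_add_right (lt_tsum_nat_add_of_lt_criticalSize hk) _
  exact hs.hasSum.tendsto_sum_nat.eventually (lt_mem_nhds hlt)

lemma sum_range_lt_tsum (ha : ∀ n, 0 < a n) (hs : Summable a) (n : ℕ) :
    ∑ m ∈ range n, a m < ∑' m, a m := by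
  rw [← hs.sum_add_tsum_nat_add n, lt_add_iff_pos_right]
  exact ((summable_nat_add_iff n).2 hs).tsum_pos (fun m => (ha _).le) 0 (ha _)

lemma sum_range_lt_sum_range_add_of_criticalSize_le (ha : ∀ n, 0 < a n) (hs : Summable a)
    (hh : 0 < h) {k : ℕ} (hk : criticalSize a h ≤ k) (n : ℕ) :
    ∑ m ∈ range n, a m < ∑ m ∈ range k, a m + h :=
  calc ∑ m ∈ range n, a m < ∑' m, a m := sum_range_lt_tsum ha hs n
    _ = ∑ m ∈ range (criticalSize a h), a m + ∑' m, a (m + criticalSize a h) :=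
      (hs.sum_add_tsum_nat_add _).symm
    _ ≤ ∑ m ∈ range k, a m + h :=
      add_le_add (sum_le_sum_of_subset_of_nonneg (range_subset_range.2 hk) fun m _ _ => (ha m).le)
        (tsum_nat_add_criticalSize_le hh)

end CriticalSize

lemma apply_lt_apply_of_unimodal {g : ℕ → ℝ} {c N : ℕ} (hup : ∀ k < c, g k < g (k + 1))
    (hdown : ∀ k, c ≤ k → k < N → g (k + 1) < g k) {i : ℕ} (hiN : i ≤ N) (hic : i ≠ c) :
    g i < g c := by
  rcases hic.lt_or_gt with hlt | hgt
  · exact strictMonoOn_Iic_of_lt_succ (by simpa using hup) hlt.le le_rfl hlt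
  · exact strictAntiOn_of_succ_lt Set.ordConnected_Icc
      (fun k _ hk hk' => by simpa using hdown k hk.1 (by simpa using hk'.2))
      ⟨le_rfl, (hgt.trans_le hiN).le⟩ ⟨hgt.le, hiN⟩ hgt

theorem critical_droplet_size_general (J : ℕ → ℝ)
    (hpos : ∀ n, 1 ≤ n → 0 < J n)
    (hsum : Summable fun n : ℕ => J (n + 1))
    (h : ℝ) (hh0 : 0 < h) :
    ∃ N₀ : ℕ, ∀ N, N₀ ≤ N →
      ∀ i, i ≤ N → i ≠ sInf {k : ℕ | ∑' n : ℕ, J (n + k + 1) ≤ h} →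
        H N J h (Lconf N i) <
          H N J h (Lconf N (sInf {k : ℕ | ∑' n : ℕ, J (n + k + 1) ≤ h})) := by
  rw [show sInf {k : ℕ | ∑' n : ℕ, J (n + k + 1) ≤ h} = criticalSize (fun n => J (n + 1)) h
    from rfl]
  have ha : ∀ n, 0 < J (n + 1) := fun n => hpos (n + 1) (Nat.le_add_left 1 n)
  obtain ⟨M, hM⟩ := eventually_atTop.1
    (eventually_sum_range_lt_add_of_lt_criticalSize (h := h) hsum)
  refine ⟨M + criticalSize (fun n => J (n + 1)) h, fun N hN i hiN hic =>
    apply_lt_apply_of_unimodal (g := fun k => H N J h (Lconf N k))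
      (fun k hk => ?_) (fun k hk hkN => ?_) hiN hic⟩
  · have hincr := H_Lconf_succ_sub J h (N := N) (k := k) (by omega)
    have hbig := hM (N - 1 - k) (by omega) k hk
    linarith
  · have hincr := H_Lconf_succ_sub J h hkN
    have hsmall := sum_range_lt_sum_range_add_of_criticalSize_le ha hsum hh0 hk (N - 1 - k)
    linarith

/-- Corollary 3.3: if `J` is positive, strictly decreasing and summable, and
`0 < h < ∑_{n=1}^∞ J(n)`, then for all sufficiently large `N` the function
`f(k) = H(L^(k))` on `{0,…,N}` attains a unique strict global maximum at
`k_c = min { k : ∑_{n=k+1}^∞ J(n) ≤ h }`. -/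
theorem critical_droplet_size (J : ℕ → ℝ)
    (hpos : ∀ n, 1 ≤ n → 0 < J n) (hdec : ∀ n, 1 ≤ n → J (n + 1) < J n)
    (hsum : Summable fun n : ℕ => J (n + 1))
    (h : ℝ) (hh0 : 0 < h) (hh1 : h < ∑' n : ℕ, J (n + 1)) :
    ∃ N₀ : ℕ, ∀ N, N₀ ≤ N →
      ∀ i, i ≤ N → i ≠ sInf {k : ℕ | ∑' n : ℕ, J (n + k + 1) ≤ h} →
        H N J h (Lconf N i) <
          H N J h (Lconf N (sInf {k : ℕ | ∑' n : ℕ, J (n + k + 1) ≤ h})) :=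
  critical_droplet_size_general J hpos hsum h hh0
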